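/- If G is a split graph, then the indicated domination number of G equals its independence number: γᵢ(G) = α(G). -/

import Mathlib

open Finset

open scoped Classical

noncomputable section

namespace IndicatedDom

variable {V : Type*} [Fintype V]

/-- Closed neighborhood `N[v]` as a `Finset`. -/
def cnbhd (G : SimpleGraph V) (v : V) : Finset V :=
  insert v (G.neighborFinset v)

/-- `D` is a dominating set of `G`. -/
def Dominates (G : SimpleGraph V) (D : Finset V) : Prop :=
  ∀ u, ∃ v ∈ D, u ∈ cnbhd G v

/-- The set of vertices not dominated by `D`. -/
def undom (G : SimpleGraph V) (D : Finset V) : Finset V :=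
  univ.filter fun u => ∀ v ∈ D, u ∉ cnbhd G v

/-- Game value of the indicated domination game with a fuel parameter:
given the set `D` of vertices selected so far, Dominator indicates an
undominated vertex `u` (minimizing), Staller selects a vertex of `N[u]`
(maximizing); each selection counts one. -/
def giAux (G : SimpleGraph V) : ℕ → Finset V → ℕ
  | 0, _ => 0
  | (fuel+1), D =>
    if h : (undom G D).Nonempty then
      (undom G D).inf' h fun u =>
        (cnbhd G u).sup' ⟨u, Finset.mem_insert_self u _⟩ fun v => giAux G fuel (insert v D) + 1
    else 0

/-- The indicated domination number `γᵢ(G)`. -/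
def indicatedDomNum (G : SimpleGraph V) : ℕ :=
  giAux G (Fintype.card V) ∅

/-- Game value of the standard domination game with a fuel parameter:
`dom = true` means it is Dominator's turn (minimizing); legal moves are
vertices dominating at least one new vertex. -/
def gameAux (G : SimpleGraph V) : ℕ → Bool → Finset V → ℕ
  | 0, _, _ => 0
  | (fuel+1), dom, D =>
    if h : (univ.filter fun v => ∃ u ∈ cnbhd G v, u ∈ undom G D).Nonempty then
      if dom then
        (univ.filter fun v => ∃ u ∈ cnbhd G v, u ∈ undom G D).inf' h
          fun v => gameAux G fuel false (insert v D) + 1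
      else
        (univ.filter fun v => ∃ u ∈ cnbhd G v, u ∈ undom G D).sup' h
          fun v => gameAux G fuel true (insert v D) + 1
    else 0

/-- The game domination number `γ_g(G)` (Dominator starts). -/
def gameDomNum (G : SimpleGraph V) : ℕ :=
  gameAux G (Fintype.card V) true ∅

/-- A minimal dominating set. -/
def IsMinimalDominating (G : SimpleGraph V) (D : Finset V) : Prop :=
  Dominates G D ∧ ∀ D' ⊂ D, ¬ Dominates G D'

/-- The upper domination number `Γ(G)`. -/
def upperDomNum (G : SimpleGraph V) : ℕ :=
  sSup {k | ∃ D : Finset V, IsMinimalDominating G D ∧ D.card = k}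

/-- A dominating (Grundy) sequence: every vertex dominates something new,
and the whole sequence dominates `G`. -/
def IsDominatingSeq (G : SimpleGraph V) (l : List V) : Prop :=
  (∀ i : Fin l.length, ∃ u, u ∈ cnbhd G (l.get i) ∧
      ∀ j : Fin l.length, (j : ℕ) < (i : ℕ) → u ∉ cnbhd G (l.get j)) ∧
    Dominates G l.toFinset

/-- The Grundy domination number `γ_gr(G)`. -/
def grundyDomNum (G : SimpleGraph V) : ℕ :=
  sSup {k | ∃ l : List V, IsDominatingSeq G l ∧ l.length = k}

/-- The independence number `α(G)`. -/
def indepNum (G : SimpleGraph V) : ℕ :=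
  sSup {k | ∃ S : Finset V, (∀ x ∈ S, ∀ y ∈ S, ¬ G.Adj x y) ∧ S.card = k}

/-- `S` is irredundant: every `x ∈ S` has a private neighbor w.r.t. `S`. -/
def Irredundant (G : SimpleGraph V) (S : Finset V) : Prop :=
  ∀ x ∈ S, ∃ w, (∃ v ∈ S, w ∈ cnbhd G v) ∧ ¬ ∃ v ∈ S.erase x, w ∈ cnbhd G v

/-- The upper irredundance number `IR(G)`. -/
def upperIrredNum (G : SimpleGraph V) : ℕ :=
  sSup {k | ∃ S : Finset V, Irredundant G S ∧ (∀ T, S ⊂ T → ¬ Irredundant G T) ∧ S.card = k}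

/-- The star `K_{1,n}` with center `0`. -/
def starGraph (n : ℕ) : SimpleGraph (Fin (n+1)) where
  Adj a b := a ≠ b ∧ (a = 0 ∨ b = 0)
  symm := by constructor; intro a b h; exact ⟨h.1.symm, h.2.symm⟩
  loopless := by constructor; intro a h; exact h.1 rfl

/-- Two copies of `K_n` with a matching joining corresponding vertices of
index `≥ 1` (i.e. `K_n □ K₂` minus the matching edge at index `0`). -/
def Hgraph (n : ℕ) : SimpleGraph (Fin n × Bool) where
  Adj a b := (a.2 = b.2 ∧ a.1 ≠ b.1) ∨ (a.2 ≠ b.2 ∧ a.1 = b.1 ∧ (a.1 : ℕ) ≠ 0)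
  symm := by
    constructor
    rintro ⟨i, s⟩ ⟨j, t⟩ (⟨h1, h2⟩ | ⟨h1, h2, h3⟩)
    · exact Or.inl ⟨h1.symm, h2.symm⟩
    · exact Or.inr ⟨h1.symm, h2.symm, h2 ▸ h3⟩
  loopless := by constructor; rintro ⟨i, s⟩ (⟨_, h⟩ | ⟨h, _⟩) <;> exact h rfl

/-- The `k`-th power of the path on `n` vertices: `i ~ j` iff `1 ≤ |i-j| ≤ k`. -/
def pathPow (n k : ℕ) : SimpleGraph (Fin n) where
  Adj i j := i ≠ j ∧ (i : ℕ) ≤ (j : ℕ) + k ∧ (j : ℕ) ≤ (i : ℕ) + k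
  symm := by constructor; intro i j h; exact ⟨h.1.symm, h.2.2, h.2.1⟩
  loopless := by constructor; intro i h; exact h.1 rfl

/-- The cycle on `m` vertices (for `m ≥ 3`), modeled on `ZMod m`. -/
def cyc (m : ℕ) : SimpleGraph (ZMod m) where
  Adj i j := i ≠ j ∧ (i + 1 = j ∨ j + 1 = i)
  symm := by constructor; intro i j h; exact ⟨h.1.symm, h.2.symm⟩
  loopless := by constructor; intro i h; exact h.1 rfl

/-- The graph `D₁`: a `9`-cycle `x₁x₂…x₉` plus chords `x₁x₃, x₄x₆, x₇x₉`
(vertex `xᵢ` is represented by `i - 1 : ZMod 9`). -/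
def DGraph : SimpleGraph (ZMod 9) where
  Adj i j := i ≠ j ∧ (i + 1 = j ∨ j + 1 = i ∨
    (i = 0 ∧ j = 2) ∨ (i = 2 ∧ j = 0) ∨ (i = 3 ∧ j = 5) ∨ (i = 5 ∧ j = 3) ∨
    (i = 6 ∧ j = 8) ∨ (i = 8 ∧ j = 6))
  symm := by constructor; intro i j h; refine ⟨h.1.symm, ?_⟩; tauto
  loopless := by constructor; intro i h; exact h.1 rfl

/-!
Staller can always answer an indicated vertex `u` by a vertex of `N[u]` in a fixed maximum
independent set `A` (one exists, since `A` is maximal), and each such answer dominates only one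
vertex of `A`; so the game lasts at least `α(G)` moves in every graph. In a split graph `K ∪ I`,
Dominator extends `I` to a maximal independent set `J` and always indicates an undominated vertex
of `J`; each answer dominates it, so the game lasts at most `|J| ≤ α(G)` moves. He can do so as
long as either Staller has only selected vertices of `I`, or the clique `K` is already dominated,
and this invariant persists since a selection in `K` dominates all of `K`.
-/

variable {G : SimpleGraph V}

lemma mem_cnbhd {u v : V} : u ∈ cnbhd G v ↔ u = v ∨ G.Adj v u := by
  simp [cnbhd]

lemma mem_cnbhd_comm {u v : V} : u ∈ cnbhd G v ↔ v ∈ cnbhd G u := by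
  simp only [mem_cnbhd, eq_comm, G.adj_comm]

lemma mem_undom {D : Finset V} {u : V} : u ∈ undom G D ↔ ∀ v ∈ D, u ∉ cnbhd G v := by
  simp [undom]

@[simp]
lemma undom_empty : undom G ∅ = univ := by
  ext; simp [undom]

lemma undom_insert_subset (v : V) (D : Finset V) : undom G (insert v D) ⊆ undom G D :=
  fun _ hx => mem_undom.2 fun w hw => mem_undom.1 hx w (mem_insert_of_mem hw)

lemma notMem_undom_insert {D : Finset V} {u v : V} (hv : v ∈ cnbhd G u) :
    u ∉ undom G (insert v D) :=
  fun hu => mem_undom.1 hu v (mem_insert_self v D) (mem_cnbhd_comm.1 hv)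

lemma inter_undom_insert_ssubset {J D : Finset V} {u v : V} (hu : u ∈ J ∩ undom G D)
    (hv : v ∈ cnbhd G u) : J ∩ undom G (insert v D) ⊂ J ∩ undom G D :=
  Finset.ssubset_iff_subset_ne.2 ⟨inter_subset_inter_left (undom_insert_subset v D),
    fun h => notMem_undom_insert hv (mem_inter.1 (h ▸ hu)).2⟩

lemma card_undom_insert_lt {D : Finset V} {u v : V} (hu : u ∈ undom G D)
    (hv : v ∈ cnbhd G u) : #(undom G (insert v D)) < #(undom G D) := by
  simpa using card_lt_card (inter_undom_insert_ssubset (J := univ) (by simpa using hu) hv)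

lemma card_inter_undom_le_card_inter_undom_insert_add_one {A D : Finset V} {a : V}
    (hA : G.IsIndepSet (A : Set V)) (ha : a ∈ A) :
    #(A ∩ undom G D) ≤ #(A ∩ undom G (insert a D)) + 1 := by
  refine (card_le_card fun x hx => ?_).trans (card_insert_le a _)
  obtain ⟨hxA, hxD⟩ := mem_inter.1 hx
  rcases eq_or_ne x a with rfl | hxa
  · exact mem_insert_self x _
  refine mem_insert_of_mem (mem_inter.2 ⟨hxA, mem_undom.2 fun w hw => ?_⟩)
  rcases mem_insert.1 hw with rfl | hwD
  · rw [mem_cnbhd, not_or]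
    exact ⟨hxa, hA ha hxA hxa.symm⟩
  · exact mem_undom.1 hxD w hwD

lemma dominates_of_maximal_isIndepSet {J : Finset V} (hJ : Maximal G.IsIndepSet (J : Set V)) :
    Dominates G J := by
  intro u
  by_contra! hu
  have hins : G.IsIndepSet (insert u (J : Set V)) :=
    hJ.prop.insert fun j hj _ => ⟨fun h => hu j hj (mem_cnbhd.2 (.inr h.symm)),
      fun h => hu j hj (mem_cnbhd.2 (.inr h))⟩
  have huJ : u ∈ J := hJ.2 hins (Set.subset_insert u _) (Set.mem_insert u _)
  exact hu u huJ (mem_insert_self u _)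

theorem card_inter_undom_le_giAux {A : Finset V} (hA : G.IsIndepSet (A : Set V))
    (hdom : Dominates G A) :
    ∀ fuel D, #(undom G D) ≤ fuel → #(A ∩ undom G D) ≤ giAux G fuel D
  | 0, D, hD => by simp [card_eq_zero.1 (Nat.le_zero.1 hD)]
  | fuel + 1, D, hD => by
    rw [giAux]
    split_ifs with hne
    · refine le_inf' _ _ fun u hu => ?_
      obtain ⟨a, haA, hua⟩ := hdom u
      have hau : a ∈ cnbhd G u := mem_cnbhd_comm.1 hua
      have hfuel : #(undom G (insert a D)) ≤ fuel := by
        have := card_undom_insert_lt hu hau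
        omega
      calc #(A ∩ undom G D) ≤ #(A ∩ undom G (insert a D)) + 1 :=
            card_inter_undom_le_card_inter_undom_insert_add_one hA haA
        _ ≤ giAux G fuel (insert a D) + 1 :=
            Nat.add_le_add_right (card_inter_undom_le_giAux hA hdom fuel _ hfuel) 1
        _ ≤ _ := le_sup' (fun v => giAux G fuel (insert v D) + 1) hau
    · simp [not_nonempty_iff_eq_empty.1 hne]

theorem giAux_le_card_inter_undom {J : Finset V} {P : Finset V → Prop}
    (hP : ∀ D v, P D → P (insert v D))
    (hJ : ∀ D, P D → (undom G D).Nonempty → (J ∩ undom G D).Nonempty) :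
    ∀ fuel D, P D → giAux G fuel D ≤ #(J ∩ undom G D)
  | 0, _, _ => Nat.zero_le _
  | fuel + 1, D, hD => by
    rw [giAux]
    split_ifs with hne
    · obtain ⟨u, hu⟩ := hJ D hD hne
      refine (inf'_le _ (mem_inter.1 hu).2).trans (sup'_le _ _ fun v hv => ?_)
      have := card_lt_card (inter_undom_insert_ssubset hu hv)
      have := giAux_le_card_inter_undom hP hJ fuel (insert v D) (hP D v hD)
      omega
    · exact Nat.zero_le _

theorem indepNum_le_indicatedDomNum (G : SimpleGraph V) : G.indepNum ≤ indicatedDomNum G := by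
  obtain ⟨A, hA⟩ := G.maximumIndepSet_exists
  have hdom := dominates_of_maximal_isIndepSet (hA.isMaximalIndepSet A)
  have := card_inter_undom_le_giAux hA.isIndepSet hdom (Fintype.card V) ∅ (by simp)
  rw [← SimpleGraph.maximumIndepSet_card_eq_indepNum A hA]
  simpa [indicatedDomNum] using this

section Split

variable {K I : Finset V}

lemma subset_or_disjoint_undom_insert (hcover : K ∪ I = univ) (hK : G.IsClique (K : Set V)) {D : Finset V}
    (v : V) (hD : D ⊆ I ∨ Disjoint K (undom G D)) :
    insert v D ⊆ I ∨ Disjoint K (undom G (insert v D)) := by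
  rcases mem_union.1 (hcover ▸ mem_univ v : v ∈ K ∪ I) with hvK | hvI
  · refine .inr (disjoint_left.2 fun k hk => notMem_undom_insert (mem_cnbhd.2 ?_))
    rcases eq_or_ne v k with rfl | hvk
    · exact .inl rfl
    · exact .inr (hK hk hvK hvk.symm)
  · exact hD.imp (insert_subset hvI) (fun h => h.mono_right (undom_insert_subset v D))

lemma inter_undom_nonempty_of_split (hcover : K ∪ I = univ) {J D : Finset V} (hIJ : I ⊆ J)
    (hJ : Maximal G.IsIndepSet (J : Set V)) (hD : D ⊆ I ∨ Disjoint K (undom G D))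
    (hne : (undom G D).Nonempty) : (J ∩ undom G D).Nonempty := by
  obtain ⟨w, hw⟩ := hne
  rcases hD with hDI | hKD
  · obtain ⟨j, hjJ, hwj⟩ := dominates_of_maximal_isIndepSet hJ w
    -- a selected vertex `d ∈ D ⊆ J` can dominate no vertex of `J` but itself
    refine ⟨j, mem_inter.2 ⟨hjJ, mem_undom.2 fun d hd hjd => ?_⟩⟩
    rcases mem_cnbhd.1 hjd with rfl | hdj
    · exact mem_undom.1 hw j hd hwj
    · exact hJ.prop (hIJ (hDI hd)) hjJ hdj.ne hdj
  · have hwK : w ∉ K := disjoint_right.1 hKD hw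
    have hwI : w ∈ I := (mem_union.1 (hcover ▸ mem_univ w : w ∈ K ∪ I)).resolve_left hwK
    exact ⟨w, mem_inter.2 ⟨hIJ hwI, hw⟩⟩

theorem indicatedDomNum_le_indepNum_of_split (hcover : K ∪ I = univ)
    (hK : G.IsClique (K : Set V)) (hI : G.IsIndepSet (I : Set V)) :
    indicatedDomNum G ≤ G.indepNum := by
  obtain ⟨S, hIS, hS⟩ := Finite.exists_le_maximal hI
  lift S to Finset V using S.toFinite
  calc indicatedDomNum G ≤ #(S ∩ undom G ∅) :=
        giAux_le_card_inter_undom (P := fun D => D ⊆ I ∨ Disjoint K (undom G D))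
          (fun _ v hD => subset_or_disjoint_undom_insert hcover hK v hD)
          (fun _ hD hne => inter_undom_nonempty_of_split hcover (coe_subset.1 hIS) hS hD hne)
          _ ∅ (.inl (empty_subset I))
    _ = #S := by simp
    _ ≤ G.indepNum := hS.prop.card_le_indepNum

end Split

theorem stmt7_general {V : Type*} [Fintype V] (G : SimpleGraph V) (K I : Finset V)
    (hcover : K ∪ I = Finset.univ)
    (hK : ∀ x ∈ K, ∀ y ∈ K, x ≠ y → G.Adj x y)
    (hI : ∀ x ∈ I, ∀ y ∈ I, ¬ G.Adj x y) :
    indicatedDomNum G = indepNum G := by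
  have hindep (S : Finset V) : (∀ x ∈ S, ∀ y ∈ S, ¬ G.Adj x y) ↔ G.IsIndepSet (S : Set V) :=
    ⟨fun h _ hx _ hy _ => h _ hx _ hy, fun h _ hx _ hy hxy => h hx hy hxy.ne hxy⟩
  have hα : indepNum G = G.indepNum := by
    simp only [indepNum, SimpleGraph.indepNum, hindep, SimpleGraph.isNIndepSet_iff]
  rw [hα]
  exact le_antisymm
    (indicatedDomNum_le_indepNum_of_split hcover (fun x hx y hy => hK x hx y hy)
      ((hindep I).1 hI))
    (indepNum_le_indicatedDomNum G)

/-- if `G` is a split graph, then `γᵢ(G) = α(G)`. -/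
theorem stmt7 {V : Type*} [Fintype V] (G : SimpleGraph V) (K I : Finset V)
    (hdisj : Disjoint K I) (hcover : K ∪ I = Finset.univ)
    (hK : ∀ x ∈ K, ∀ y ∈ K, x ≠ y → G.Adj x y)
    (hI : ∀ x ∈ I, ∀ y ∈ I, ¬ G.Adj x y) :
    indicatedDomNum G = indepNum G :=
  stmt7_general G K I hcover hK hI

end IndicatedDom
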